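/- arXiv:1403.7801 — 5 statements merged into one kernel-verified Lean document; each statement's English description precedes it below -/
import Mathlib

section
/- Let p be an odd prime and let ε ∈ 𝔽_p be a non-square. Let M ∈ GL₂(𝔽_p) satisfy M² = εI (where I is the identity matrix). Then there exists a matrix A ∈ SL₂(ℤ) such that Ā M Ā⁻¹ = (0 1; ε 0), where Ā denotes the reduction of A modulo p. -/
/-!
A matrix `B` with rows `r` and `r M` satisfies `B M = J B` for `J = (0 1; ε 0)`, because
`r M² = ε r`. Its determinant is a binary quadratic form in `r` of discriminant `ε ≠ 0`
(the condition that `ε` is not a square forces `M 0 1 ≠ 0` and `tr M = 0`), and over a finite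
field of odd order such a form represents `1`; so some `B` lies in `SL₂(𝔽_p)` and conjugates
`M` to `J`. Finally `SL₂(𝔽_p)` is generated by transvections, each of which lifts to `SL₂(ℤ)`.
-/

open Matrix

/-- The Cartan non-split ring mod `p`: the set of matrices `(a b; c d)` over `𝔽_p`
with `a = d` and `c = ε * b`. -/
def CnsSet (p : ℕ) (ε : ZMod p) : Set (Matrix (Fin 2) (Fin 2) (ZMod p)) :=
  {A | A 0 0 = A 1 1 ∧ A 1 0 = ε * A 0 1}

/-- The matrix `(0 1; ε 0)`. -/
def Jmat (p : ℕ) (ε : ZMod p) : Matrix (Fin 2) (Fin 2) (ZMod p) := !![0, 1; ε, 0]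

theorem Matrix.SL2.map_surjective {R F : Type*} [CommRing R] [Field F] {f : R →+* F}
    (hf : Function.Surjective f) :
    Function.Surjective (SpecialLinearGroup.map (n := Fin 2) f) := by
  intro B
  induction B using Matrix.SL2.transvection_induction with
  | htransvec i j hij c =>
    obtain ⟨r, rfl⟩ := hf c
    refine ⟨SpecialLinearGroup.transvection hij r, ?_⟩
    ext k l
    simp only [SpecialLinearGroup.map_apply_coe, RingHom.mapMatrix_apply, map_apply,
      SpecialLinearGroup.transvection_coe, add_apply, single_apply, one_apply]
    split_ifs <;> simp
  | hmul A B hA hB =>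
    obtain ⟨a, rfl⟩ := hA
    obtain ⟨b, rfl⟩ := hB
    exact ⟨a * b, map_mul _ a b⟩

section FiniteField

variable {K : Type*} [Field K] [Fintype K]

open Polynomial in
theorem exists_mul_sq_add_mul_sq_eq_one (hK : Fintype.card K % 2 = 1) {α β : K}
    (hα : α ≠ 0) (hβ : β ≠ 0) : ∃ u v : K, α * u ^ 2 + β * v ^ 2 = 1 := by
  obtain ⟨u, v, huv⟩ := FiniteField.exists_root_sum_quadratic
    (f := C α * X ^ 2) (g := C β * X ^ 2 - 1)
    (by simpa using degree_C_mul_X_pow 2 hα)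
    (by rw [degree_sub_eq_left_of_degree_lt] <;> simp [degree_C_mul_X_pow 2 hβ]) hK
  simp only [eval_mul, eval_C, eval_pow, eval_X, eval_sub, eval_one] at huv
  exact ⟨u, v, by linear_combination huv⟩

theorem exists_binaryForm_eq_one (hK : Fintype.card K % 2 = 1) {a b c : K} (ha : a ≠ 0)
    (hdisc : b ^ 2 - a * c ≠ 0) : ∃ x y : K, a * x ^ 2 + 2 * b * x * y + c * y ^ 2 = 1 := by
  obtain ⟨u, v, huv⟩ := exists_mul_sq_add_mul_sq_eq_one hK ha
    (β := (a * c - b ^ 2) / a) (div_ne_zero (by rw [← neg_sub]; exact neg_ne_zero.2 hdisc) ha)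
  -- complete the square: `a x² + 2bxy + cy² = a (x + b y / a)² + (c - b² / a) y²`
  refine ⟨u - b / a * v, v, ?_⟩
  rw [← huv]
  field_simp
  ring

end FiniteField

section RowVecMul

variable {R : Type*} [CommRing R]

def Matrix.ofRowVecMul (M : Matrix (Fin 2) (Fin 2) R) (r : Fin 2 → R) :
    Matrix (Fin 2) (Fin 2) R :=
  of ![r, r ᵥ* M]

theorem Matrix.ofRowVecMul_mul {M : Matrix (Fin 2) (Fin 2) R} {ε : R} (hM : M ^ 2 = ε • 1)
    (r : Fin 2 → R) : M.ofRowVecMul r * M = !![0, 1; ε, 0] * M.ofRowVecMul r := by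
  have hrow : r ᵥ* M ᵥ* M = ε • r := by rw [vecMul_vecMul, ← sq, hM, vecMul_smul, vecMul_one]
  ext i j
  fin_cases i
  · simp [ofRowVecMul, mul_apply, vecMul, dotProduct, Fin.sum_univ_two]
  · simpa [ofRowVecMul, mul_apply, vecMul, dotProduct, Fin.sum_univ_two] using congrFun hrow j

theorem Matrix.det_ofRowVecMul (M : Matrix (Fin 2) (Fin 2) R) (r : Fin 2 → R) :
    (M.ofRowVecMul r).det =
      M 0 1 * r 0 ^ 2 + (M 1 1 - M 0 0) * r 0 * r 1 - M 1 0 * r 1 ^ 2 := by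
  simp only [ofRowVecMul, det_fin_two, of_apply, cons_val', vecMul, dotProduct, Fin.sum_univ_two,
    cons_val_fin_one, cons_val_zero, cons_val_one]
  ring

end RowVecMul

theorem exists_SL2_mul_eq_mul_of_sq_eq_smul_one {K : Type*} [Field K] [Fintype K]
    (hK : Fintype.card K % 2 = 1) {ε : K} (hε : ¬IsSquare ε) {M : Matrix (Fin 2) (Fin 2) K}
    (hM : M ^ 2 = ε • 1) :
    ∃ B : SpecialLinearGroup (Fin 2) K,
      (B : Matrix (Fin 2) (Fin 2) K) * M = !![0, 1; ε, 0] * B := by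
  have h00 : M 0 0 ^ 2 + M 0 1 * M 1 0 = ε := by
    simpa [sq, mul_apply, Fin.sum_univ_two] using congrFun (congrFun hM 0) 0
  have h01 : M 0 1 * (M 0 0 + M 1 1) = 0 := by
    simpa [sq, mul_apply, Fin.sum_univ_two, mul_add, mul_comm] using congrFun (congrFun hM 0) 1
  have hM01 : M 0 1 ≠ 0 := fun h ↦ hε ⟨M 0 0, by rw [← h00, h]; ring⟩
  have htrace : M 1 1 = -M 0 0 := by
    linear_combination (mul_eq_zero.1 h01).resolve_left hM01
  have hε0 : ε ≠ 0 := by rintro rfl; exact hε .zero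
  obtain ⟨x, y, hxy⟩ := exists_binaryForm_eq_one hK hM01 (b := -M 0 0) (c := -M 1 0)
    (by convert hε0 using 1; linear_combination h00)
  refine ⟨⟨M.ofRowVecMul ![x, y], ?_⟩, ofRowVecMul_mul hM _⟩
  rw [det_ofRowVecMul, ← hxy, htrace]
  simp only [cons_val_zero, cons_val_one, cons_val_fin_one]
  ring

theorem conjugate_to_standard_general (p : ℕ) [Fact p.Prime] (hp : Odd p)
    (ε : ZMod p) (hε : ¬ IsSquare ε)
    (M : Matrix (Fin 2) (Fin 2) (ZMod p))
    (hM2 : M ^ 2 = ε • (1 : Matrix (Fin 2) (Fin 2) (ZMod p))) :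
    ∃ A : Matrix.SpecialLinearGroup (Fin 2) ℤ,
      (Matrix.SpecialLinearGroup.map (Int.castRingHom (ZMod p)) A
          : Matrix (Fin 2) (Fin 2) (ZMod p)) * M *
        ((Matrix.SpecialLinearGroup.map (Int.castRingHom (ZMod p)) A)⁻¹
          : Matrix (Fin 2) (Fin 2) (ZMod p)) = Jmat p ε := by
  have hcard : Fintype.card (ZMod p) % 2 = 1 := by rw [ZMod.card]; exact Nat.odd_iff.mp hp
  obtain ⟨B, hB⟩ := exists_SL2_mul_eq_mul_of_sq_eq_smul_one hcard hε hM2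
  have hunit : IsUnit (B : Matrix (Fin 2) (Fin 2) (ZMod p)).det := by
    rw [Matrix.SpecialLinearGroup.det_coe]
    exact isUnit_one
  obtain ⟨A, rfl⟩ := SL2.map_surjective (ZMod.ringHom_surjective (Int.castRingHom (ZMod p))) B
  exact ⟨A, by rw [hB, mul_assoc, mul_nonsing_inv _ hunit, mul_one, Jmat]⟩

/-- Any `M ∈ GL₂(𝔽_p)` with `M² = ε·I` is conjugate to `(0 1; ε 0)` by the reduction of
a matrix in `SL₂(ℤ)`. -/
theorem conjugate_to_standard (p : ℕ) [Fact p.Prime] (hp : Odd p)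
    (ε : ZMod p) (hε : ¬ IsSquare ε)
    (M : Matrix (Fin 2) (Fin 2) (ZMod p)) (hM : IsUnit M)
    (hM2 : M ^ 2 = ε • (1 : Matrix (Fin 2) (Fin 2) (ZMod p))) :
    ∃ A : Matrix.SpecialLinearGroup (Fin 2) ℤ,
      (Matrix.SpecialLinearGroup.map (Int.castRingHom (ZMod p)) A
          : Matrix (Fin 2) (Fin 2) (ZMod p)) * M *
        ((Matrix.SpecialLinearGroup.map (Int.castRingHom (ZMod p)) A)⁻¹
          : Matrix (Fin 2) (Fin 2) (ZMod p)) = Jmat p ε :=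
  conjugate_to_standard_general p hp ε hε M hM2
end

section
/- Let p be an odd prime, let ε ∈ 𝔽_p be a non-square, and let n be an integer not divisible by p. Then there exists a matrix A ∈ SL₂(ℤ) whose reduction modulo p equals B · diag(1, n⁻¹) for some invertible B ∈ C_ns^ε(p); and for every such matrix A one has A⁻¹ · Γ_ns^ε(p) · A = Γ_ns^{εn²}(p) (conjugation inside SL₂(ℤ)). -/
open Matrix

lemma cns_one (p : ℕ) (ε : ZMod p) : (1 : Matrix (Fin 2) (Fin 2) (ZMod p)) ∈ CnsSet p ε := by
  simp [CnsSet, Matrix.one_apply]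

lemma cns_mul {p : ℕ} {ε : ZMod p} {A B : Matrix (Fin 2) (Fin 2) (ZMod p)}
    (hA : A ∈ CnsSet p ε) (hB : B ∈ CnsSet p ε) : A * B ∈ CnsSet p ε := by
  obtain ⟨hA1, hA2⟩ := hA
  obtain ⟨hB1, hB2⟩ := hB
  constructor <;>
    · simp only [Matrix.mul_apply, Fin.sum_univ_two, hA1, hA2, hB1, hB2]
      ring

lemma cns_adj {p : ℕ} {ε : ZMod p} {A : Matrix (Fin 2) (Fin 2) (ZMod p)}
    (hA : A ∈ CnsSet p ε) : A.adjugate ∈ CnsSet p ε := by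
  obtain ⟨hA1, hA2⟩ := hA
  rw [Matrix.adjugate_fin_two]
  refine ⟨by simp [hA1], by simp [hA2]⟩

/-- Reduction modulo `p` on `SL₂`. -/
def redSL (p : ℕ) :
    Matrix.SpecialLinearGroup (Fin 2) ℤ →* Matrix.SpecialLinearGroup (Fin 2) (ZMod p) :=
  Matrix.SpecialLinearGroup.map (Int.castRingHom (ZMod p))

/-- The determinant-one part of the Cartan non-split ring, as a subgroup of `SL₂(𝔽_p)`. -/
def CnsSL (p : ℕ) (ε : ZMod p) : Subgroup (Matrix.SpecialLinearGroup (Fin 2) (ZMod p)) where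
  carrier := {A | (A : Matrix (Fin 2) (Fin 2) (ZMod p)) ∈ CnsSet p ε}
  one_mem' := by simpa using cns_one p ε
  mul_mem' := by
    intro A B hA hB
    simpa using cns_mul hA hB
  inv_mem' := by
    intro A hA
    simp only [Set.mem_setOf_eq, Matrix.SpecialLinearGroup.coe_inv] at hA ⊢
    exact cns_adj hA

/-- The Cartan non-split group `Γ_ns^ε(p)`: the subgroup of `SL₂(ℤ)` of matrices whose
reduction modulo `p` lies in the Cartan non-split ring. -/
def GammaNs (p : ℕ) (ε : ZMod p) : Subgroup (Matrix.SpecialLinearGroup (Fin 2) ℤ) :=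
  (CnsSL p ε).comap (redSL p)

/-!
The Cartan ring `CnsSet p ε` is the commutant of `J_ε = cartanGen ε = !![0, 1; ε, 0]`, and
`D = diag(1, n⁻¹)` satisfies `J_ε D = D (n⁻¹ J_{εn²})`. So if `A ≡ B D (mod p)` with `B` in the
Cartan ring, then `A` intertwines `J_ε` with a nonzero multiple of `J_{εn²}` modulo `p`, and
conjugation by `A` exchanges their commutants, i.e. `Γ_ns^ε(p)` and `Γ_ns^{εn²}(p)`.

For existence, since `p` is odd and `ε ≠ 0`, the norm form `a² - εb²` takes every value in `𝔽_p`.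
Taking `a² - εb² = n` and `B = !![a, b; εb, a]`, the matrix `B D` lies in `SL₂(𝔽_p)`, and it lifts
to `SL₂(ℤ)` because reduction modulo a prime is surjective on `SL₂` (complete a coprime lift of
the bottom row).
-/

open scoped MatrixGroups

def cartanGen {R : Type*} [Zero R] [One R] (ε : R) : Matrix (Fin 2) (Fin 2) R :=
  !![0, 1; ε, 0]

lemma mem_cnsSet_iff_commute {p : ℕ} {ε : ZMod p} {M : Matrix (Fin 2) (Fin 2) (ZMod p)} :
    M ∈ CnsSet p ε ↔ Commute M (cartanGen ε) := by
  rw [Commute, SemiconjBy, ← Matrix.ext_iff, Fin.forall_fin_two, Fin.forall_fin_two,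
    Fin.forall_fin_two]
  simp only [CnsSet, cartanGen, Set.mem_ofPred_eq, Matrix.mul_apply, Fin.sum_univ_two,
    Matrix.of_apply, Matrix.cons_val', Matrix.cons_val_zero, Matrix.cons_val_one,
    Matrix.cons_val_fin_one, mul_zero, zero_mul, one_mul, mul_one, zero_add, add_zero]
  constructor
  · rintro ⟨h1, h2⟩
    simp [h1, h2, mul_comm]
  · rintro ⟨⟨-, h2⟩, -, h4⟩
    exact ⟨h2, h4⟩

lemma semiconjBy_diag_cartanGen {K : Type*} [Field K] {ε ν : K} (hν : ν ≠ 0) :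
    SemiconjBy !![1, 0; 0, ν⁻¹] (ν⁻¹ • cartanGen (ε * ν ^ 2)) (cartanGen ε) := by
  rw [SemiconjBy, cartanGen, cartanGen]
  ext i j
  fin_cases i <;> fin_cases j <;> simp [Matrix.mul_apply]
  field_simp

lemma commute_units_conj_iff_of_semiconjBy {M : Type*} [Monoid M] {u : Mˣ} {x y : M}
    (h : SemiconjBy (↑u) x y) (m : M) : Commute (↑u * m * ↑u⁻¹) y ↔ Commute m x := by
  have hy : y = u * x * ↑u⁻¹ := by rw [h.eq, mul_assoc, Units.mul_inv, mul_one]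
  subst hy
  simp only [Commute, SemiconjBy, mul_assoc, Units.inv_mul_cancel_left, Units.mul_right_inj]
  simp only [← mul_assoc, Units.mul_left_inj]

lemma IsCoprime.exists_isCoprime_add_mul {R : Type*} [CommRing R] {w q : R}
    (h : IsCoprime w q) (y : R) : ∃ t, IsCoprime w (y + q * t) := by
  obtain ⟨a, b, hab⟩ := h
  -- `y + q b (1 - y) = 1 - a w (1 - y)` is `1` modulo `w`
  exact ⟨b * (1 - y), a * (1 - y), 1, by linear_combination (1 - y) * hab⟩

lemma exists_isCoprime_intCast_eq {p : ℕ} [Fact p.Prime] {c d : ZMod p} (h : c ≠ 0 ∨ d ≠ 0) :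
    ∃ c₀ d₀ : ℤ, (c₀ : ZMod p) = c ∧ (d₀ : ZMod p) = d ∧ IsCoprime c₀ d₀ := by
  wlog hc : c ≠ 0 generalizing c d
  · obtain ⟨d₀, c₀, hd, hc, hcop⟩ := this h.symm (h.resolve_left hc)
    exact ⟨c₀, d₀, hc, hd, hcop.symm⟩
  obtain ⟨c₀, rfl⟩ := ZMod.intCast_surjective c
  obtain ⟨d₁, rfl⟩ := ZMod.intCast_surjective d
  have hcp : IsCoprime c₀ p := ((ZMod.coe_int_isUnit_iff_isCoprime c₀ p).mp hc.isUnit).symm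
  obtain ⟨t, ht⟩ := hcp.exists_isCoprime_add_mul d₁
  exact ⟨c₀, d₁ + p * t, rfl, by simp, ht⟩

lemma redSL_apply (p : ℕ) (A : SL(2, ℤ)) (i j : Fin 2) :
    (redSL p A : Matrix (Fin 2) (Fin 2) (ZMod p)) i j = (A i j : ZMod p) :=
  rfl

lemma redSL_surjective (p : ℕ) [Fact p.Prime] : Function.Surjective (redSL p) := by
  intro M
  have hrow : M 1 0 ≠ 0 ∨ M 1 1 ≠ 0 := by
    by_contra! h
    have hdet := M.det_coe
    rw [Matrix.det_fin_two, h.1, h.2] at hdet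
    simp at hdet
  obtain ⟨c, d, hc, hd, x, y, hxy⟩ := exists_isCoprime_intCast_eq hrow
  obtain ⟨a, ha⟩ := ZMod.intCast_surjective (M 0 0)
  obtain ⟨b, hb⟩ := ZMod.intCast_surjective (M 0 1)
  obtain ⟨k, hk⟩ : (p : ℤ) ∣ a * d - b * c - 1 := by
    rw [← ZMod.intCast_zmod_eq_zero_iff_dvd]
    push_cast
    rw [ha, hb, hc, hd, ← Matrix.det_fin_two, M.det_coe, sub_self]
  obtain ⟨A, hA⟩ : ∃ A : SL(2, ℤ),
      (A : Matrix (Fin 2) (Fin 2) ℤ) = !![a - p * k * y, b + p * k * x; c, d] := by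
    refine ⟨⟨_, ?_⟩, rfl⟩
    rw [Matrix.det_fin_two_of]
    linear_combination hk - p * k * hxy
  refine ⟨A, ?_⟩
  ext i j
  fin_cases i <;> fin_cases j <;> simp [redSL_apply, hA, ha, hb, hc, hd]

open Polynomial in
lemma exists_sq_sub_mul_sq_eq {K : Type*} [Field K] [Fintype K] (hK : Fintype.card K % 2 = 1)
    {ε : K} (hε : ε ≠ 0) (x : K) : ∃ a b : K, a ^ 2 - ε * b ^ 2 = x := by
  obtain ⟨a, b, hab⟩ := FiniteField.exists_root_sum_quadratic (f := X ^ 2 - C x)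
    (g := C (-ε) * X ^ 2) (by compute_degree!) (by compute_degree!) hK
  simp only [eval_sub, eval_pow, eval_X, eval_C, eval_mul] at hab
  exact ⟨a, b, by linear_combination hab⟩

lemma exists_cnsSet_mul_diag_det_eq_one {p : ℕ} [Fact p.Prime] (hp : Odd p) {ε : ZMod p}
    (hε : ε ≠ 0) {ν : ZMod p} (hν : ν ≠ 0) :
    ∃ B ∈ CnsSet p ε, IsUnit B ∧ (B * !![1, 0; 0, ν⁻¹]).det = 1 := by
  obtain ⟨a, b, hab⟩ :=
    exists_sq_sub_mul_sq_eq (by rw [ZMod.card]; exact Nat.odd_iff.mp hp) hε ν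
  have hdetB : (!![a, b; ε * b, a] : Matrix (Fin 2) (Fin 2) (ZMod p)).det = ν := by
    rw [Matrix.det_fin_two_of, ← hab]
    ring
  refine ⟨!![a, b; ε * b, a], ⟨rfl, rfl⟩, ?_, ?_⟩
  · rw [Matrix.isUnit_iff_isUnit_det, hdetB]
    exact hν.isUnit
  · rw [Matrix.det_mul, hdetB]
    simp [Matrix.det_fin_two_of, hν]

lemma mem_cnsSL_iff {p : ℕ} {ε : ZMod p} {g : SL(2, ZMod p)} :
    g ∈ CnsSL p ε ↔ (g : Matrix (Fin 2) (Fin 2) (ZMod p)) ∈ CnsSet p ε :=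
  Iff.rfl

lemma conj_mem_cnsSL_iff {p : ℕ} [Fact p.Prime] {ε ν : ZMod p} (hν : ν ≠ 0)
    {B : Matrix (Fin 2) (Fin 2) (ZMod p)} (hB : B ∈ CnsSet p ε)
    {X : SL(2, ZMod p)}
    (hX : (X : Matrix (Fin 2) (Fin 2) (ZMod p)) = B * !![1, 0; 0, ν⁻¹])
    (g : SL(2, ZMod p)) :
    X * g * X⁻¹ ∈ CnsSL p ε ↔ g ∈ CnsSL p (ε * ν ^ 2) := by
  have hsemi : SemiconjBy (SpecialLinearGroup.toGL X : Matrix (Fin 2) (Fin 2) (ZMod p))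
      (ν⁻¹ • cartanGen (ε * ν ^ 2)) (cartanGen ε) := by
    rw [SpecialLinearGroup.coe_GL_coe_matrix, hX]
    exact (mem_cnsSet_iff_commute.mp hB).semiconjBy.mul_left (semiconjBy_diag_cartanGen hν)
  rw [mem_cnsSL_iff, mem_cnsSL_iff, mem_cnsSet_iff_commute, mem_cnsSet_iff_commute,
    ← Commute.smul_right_iff₀ (x := (g : Matrix (Fin 2) (Fin 2) (ZMod p))) (inv_ne_zero hν),
    ← commute_units_conj_iff_of_semiconjBy hsemi]
  simp [← map_inv]

lemma conj_mem_gammaNs_iff {p : ℕ} [Fact p.Prime] {ε ν : ZMod p} (hν : ν ≠ 0)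
    {B : Matrix (Fin 2) (Fin 2) (ZMod p)} (hB : B ∈ CnsSet p ε)
    {A : SL(2, ℤ)}
    (hA : (redSL p A : Matrix (Fin 2) (Fin 2) (ZMod p)) = B * !![1, 0; 0, ν⁻¹])
    (g : SL(2, ℤ)) :
    A * g * A⁻¹ ∈ GammaNs p ε ↔ g ∈ GammaNs p (ε * ν ^ 2) := by
  simp only [GammaNs, Subgroup.mem_comap, map_mul, map_inv]
  exact conj_mem_cnsSL_iff hν hB hA _

/-- There is a matrix `A ∈ SL₂(ℤ)` whose reduction mod `p` is `B · diag(1, n⁻¹)` with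
`B` an invertible element of the Cartan non-split ring, and any such `A` conjugates
`Γ_ns^ε(p)` onto `Γ_ns^{εn²}(p)`. -/
theorem exists_conjugating_matrix (p : ℕ) [Fact p.Prime] (hp : Odd p)
    (ε : ZMod p) (hε : ¬ IsSquare ε) (n : ℤ) (hn : ¬ (p : ℤ) ∣ n) :
    (∃ A : Matrix.SpecialLinearGroup (Fin 2) ℤ, ∃ B ∈ CnsSet p ε, IsUnit B ∧
        (redSL p A : Matrix (Fin 2) (Fin 2) (ZMod p))
          = B * !![1, 0; 0, ((n : ZMod p))⁻¹]) ∧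
    ∀ A : Matrix.SpecialLinearGroup (Fin 2) ℤ,
      (∃ B ∈ CnsSet p ε, IsUnit B ∧
        (redSL p A : Matrix (Fin 2) (Fin 2) (ZMod p))
          = B * !![1, 0; 0, ((n : ZMod p))⁻¹]) →
      (fun g => A⁻¹ * g * A) '' (GammaNs p ε : Set (Matrix.SpecialLinearGroup (Fin 2) ℤ))
        = (GammaNs p (ε * (n : ZMod p) ^ 2)
            : Set (Matrix.SpecialLinearGroup (Fin 2) ℤ)) := by
  have hν : (n : ZMod p) ≠ 0 := by rwa [Ne, ZMod.intCast_zmod_eq_zero_iff_dvd]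
  have hε₀ : ε ≠ 0 := by
    rintro rfl
    exact hε IsSquare.zero
  constructor
  · obtain ⟨B, hB, hBunit, hdet⟩ := exists_cnsSet_mul_diag_det_eq_one hp hε₀ hν
    obtain ⟨A, hA⟩ := redSL_surjective p ⟨_, hdet⟩
    exact ⟨A, B, hB, hBunit, congrArg Subtype.val hA⟩
  · rintro A ⟨B, hB, -, hA⟩
    rw [Set.image_eq_preimage_of_inverse (g := fun g => A * g * A⁻¹) (fun _ => by group)
      (fun _ => by group)]
    ext g
    exact conj_mem_gammaNs_iff hν hB hA g
end

section
/- Let p be an odd prime, let ε ∈ 𝔽_p be a non-square, and let n, n' be integers not divisible by p with n ≡ n' (mod p). Suppose A, A' ∈ SL₂(ℤ) are such that the reduction of A modulo p equals B · diag(1, n⁻¹) and the reduction of A' modulo p equals B' · diag(1, n'⁻¹), for some invertible B, B' ∈ C_ns^ε(p). Then A · A'⁻¹ ∈ Γ_ns^ε(p). -/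
open Matrix

lemma cns_smul {p : ℕ} {ε : ZMod p} {A : Matrix (Fin 2) (Fin 2) (ZMod p)} (c : ZMod p)
    (hA : A ∈ CnsSet p ε) : c • A ∈ CnsSet p ε := by
  obtain ⟨h1, h2⟩ := hA
  refine ⟨by simp [h1], ?_⟩
  simp only [Matrix.smul_apply, smul_eq_mul, h2]
  ring

/-- If `A, A' ∈ SL₂(ℤ)` reduce mod `p` to `B·diag(1,n⁻¹)` and `B'·diag(1,n'⁻¹)` with
`B, B'` invertible elements of the Cartan non-split ring and `n ≡ n' (mod p)`, then
`A · A'⁻¹ ∈ Γ_ns^ε(p)`. -/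
theorem well_defined_up_to_cartan (p : ℕ) [Fact p.Prime] (hp : Odd p)
    (ε : ZMod p) (hε : ¬ IsSquare ε) (n n' : ℤ)
    (hn : ¬ (p : ℤ) ∣ n) (hn' : ¬ (p : ℤ) ∣ n') (hnn' : n ≡ n' [ZMOD p])
    (A A' : Matrix.SpecialLinearGroup (Fin 2) ℤ)
    (B B' : Matrix (Fin 2) (Fin 2) (ZMod p))
    (hB : B ∈ CnsSet p ε) (hBu : IsUnit B)
    (hB' : B' ∈ CnsSet p ε) (hBu' : IsUnit B')
    (hA : (redSL p A : Matrix (Fin 2) (Fin 2) (ZMod p))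
        = B * !![1, 0; 0, ((n : ZMod p))⁻¹])
    (hA' : (redSL p A' : Matrix (Fin 2) (Fin 2) (ZMod p))
        = B' * !![1, 0; 0, ((n' : ZMod p))⁻¹]) :
    A * A'⁻¹ ∈ GammaNs p ε := by
  have hcast : ((n : ZMod p)) = ((n' : ZMod p)) := (ZMod.intCast_eq_intCast_iff' n n' p).mpr hnn'
  show ((redSL p (A * A'⁻¹)) : Matrix (Fin 2) (Fin 2) (ZMod p)) ∈ CnsSet p ε
  have h : ((redSL p (A * A'⁻¹)) : Matrix (Fin 2) (Fin 2) (ZMod p))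
      = (redSL p A : Matrix (Fin 2) (Fin 2) (ZMod p))
        * ((redSL p A' : Matrix (Fin 2) (Fin 2) (ZMod p))).adjugate := by
    rw [_root_.map_mul, map_inv]
    simp [Matrix.SpecialLinearGroup.coe_inv]
  rw [h, hA, hA', Matrix.adjugate_mul_distrib]
  have key : B * !![1, 0; 0, ((n : ZMod p))⁻¹]
        * (Matrix.adjugate !![1, 0; 0, ((n' : ZMod p))⁻¹] * Matrix.adjugate B')
      = ((n' : ZMod p))⁻¹ • (B * Matrix.adjugate B') := by
    rw [Matrix.adjugate_fin_two, hcast]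
    ext i j
    fin_cases i <;> fin_cases j <;>
      simp [Matrix.mul_apply, Fin.sum_univ_two, Matrix.vecMul, dotProduct,
        Matrix.vecHead, Matrix.vecTail] <;> ring
  rw [key]
  exact cns_smul _ (cns_mul hB (cns_adj hB'))
end

section
/- Let p be an odd prime and let ε ∈ 𝔽_p be a non-square. Then the reduction-modulo-p map from the Cartan non-split group Γ_ns^ε(p) to the group {M ∈ C_ns^ε(p) : det M = 1} is a surjective group homomorphism whose kernel is the principal congruence subgroup Γ(p). -/
open Matrix

/-- The reduction map from `Γ_ns^ε(p)` to the determinant-one part of the Cartan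
non-split ring, as a group homomorphism. -/
def redNs (p : ℕ) (ε : ZMod p) : GammaNs p ε →* CnsSL p ε :=
  MonoidHom.codRestrict ((redSL p).domRestrict (GammaNs p ε)) (CnsSL p ε) (fun x => x.2)

/-!
Reduction modulo `p` maps `SL₂(ℤ)` onto `SL₂(𝔽_p)`: a matrix of `SL₂(𝔽_p)` with nonzero
lower-left entry is a product of three elementary transvections, each of which lifts to `SL₂(ℤ)`,
and any other matrix acquires a nonzero lower-left entry after multiplication by a lower
transvection. Since `Γ_ns^ε(p)` is the full preimage of its image, reduction restricted to it is
still onto, and its kernel is `Γ(p) ∩ Γ_ns^ε(p)`.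
-/

theorem MonoidHom.ker_subgroupComap {G G' : Type*} [Group G] [Group G'] (f : G →* G')
    (H' : Subgroup G') : (f.subgroupComap H').ker = f.ker.subgroupOf (H'.comap f) := by
  ext x
  exact Subtype.ext_iff

namespace Matrix.SpecialLinearGroup

theorem map_transvection {R S ι : Type*} [CommRing R] [CommRing S] [DecidableEq ι] [Fintype ι]
    (f : R →+* S) {i j : ι} (hij : i ≠ j) (b : R) :
    map f (transvection hij b) = transvection hij (f b) := by
  ext k l
  by_cases h : i = k ∧ j = l <;> simp [transvection_coe, Matrix.one_apply, h]

theorem det_fin_two_eq_one {R : Type*} [CommRing R] (B : SpecialLinearGroup (Fin 2) R) :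
    B 0 0 * B 1 1 - B 0 1 * B 1 0 = 1 :=
  (det_coe B ▸ det_fin_two B.1).symm

variable {K : Type*} [Field K]

theorem eq_transvection_mul_transvection_mul_transvection (B : SpecialLinearGroup (Fin 2) K)
    (hc : B 1 0 ≠ 0) :
    B = transvection zero_ne_one ((B 0 0 - 1) / B 1 0) * transvection one_ne_zero (B 1 0) *
      transvection zero_ne_one ((B 1 1 - 1) / B 1 0) := by
  ext i j
  fin_cases i <;> fin_cases j <;>
    simp [transvection_coe, Matrix.mul_apply, Fin.sum_univ_two, Matrix.one_apply,
      div_mul_cancel₀ _ hc, mul_div_cancel₀ _ hc]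
  field_simp
  linear_combination -det_fin_two_eq_one B

theorem map_surjective_fin_two {R : Type*} [CommRing R] (f : R →+* K)
    (hf : Function.Surjective f) :
    Function.Surjective (map (n := Fin 2) f) := by
  have transvection_mem {i j : Fin 2} (hij : i ≠ j) (b : K) :
      transvection hij b ∈ (map f).range := by
    obtain ⟨r, rfl⟩ := hf b
    exact ⟨transvection hij r, map_transvection f hij r⟩
  have mem_of_ne_zero (B : SpecialLinearGroup (Fin 2) K) (hc : B 1 0 ≠ 0) :
      B ∈ (map f).range := by
    rw [eq_transvection_mul_transvection_mul_transvection B hc]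
    exact mul_mem (mul_mem (transvection_mem _ _) (transvection_mem _ _)) (transvection_mem _ _)
  intro B
  by_cases hc : B 1 0 = 0
  · have hd : B 1 1 ≠ 0 := fun hd => by simpa [hc, hd] using det_fin_two_eq_one B
    have hBt : (B * transvection one_ne_zero 1 : SpecialLinearGroup (Fin 2) K) 1 0 ≠ 0 := by
      simpa [transvection_coe, Matrix.mul_apply, Fin.sum_univ_two, hc] using hd
    have := mul_mem (mem_of_ne_zero _ hBt) (inv_mem (transvection_mem one_ne_zero 1))
    rwa [mul_inv_cancel_right] at this
  · exact mem_of_ne_zero B hc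

end Matrix.SpecialLinearGroup

theorem reduction_surjective_ker_gamma_general (p : ℕ) [Fact p.Prime]
    (ε : ZMod p) :
    (∀ A : GammaNs p ε, ((redNs p ε A : Matrix.SpecialLinearGroup (Fin 2) (ZMod p)))
        = redSL p (A : Matrix.SpecialLinearGroup (Fin 2) ℤ)) ∧
    Function.Surjective (redNs p ε) ∧
    (redNs p ε).ker = (CongruenceSubgroup.Gamma p).subgroupOf (GammaNs p ε) := by
  refine ⟨fun _ => rfl, ?_, (redSL p).ker_subgroupComap (CnsSL p ε)⟩
  exact (redSL p).subgroupComap_surjective_of_surjective (CnsSL p ε)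
    (Matrix.SpecialLinearGroup.map_surjective_fin_two _ ZMod.intCast_surjective)

/-- The reduction map `Γ_ns^ε(p) → {M ∈ C_ns^ε(p) : det M = 1}` is a surjective group
homomorphism with kernel the principal congruence subgroup `Γ(p)`. -/
theorem reduction_surjective_ker_gamma (p : ℕ) [Fact p.Prime] (hp : Odd p)
    (ε : ZMod p) (hε : ¬ IsSquare ε) :
    (∀ A : GammaNs p ε, ((redNs p ε A : Matrix.SpecialLinearGroup (Fin 2) (ZMod p)))
        = redSL p (A : Matrix.SpecialLinearGroup (Fin 2) ℤ)) ∧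
    Function.Surjective (redNs p ε) ∧
    (redNs p ε).ker = (CongruenceSubgroup.Gamma p).subgroupOf (GammaNs p ε) :=
  reduction_surjective_ker_gamma_general p ε
end

section
/- Let p be an odd prime, let ε ∈ 𝔽_p be a non-square, and let M ∈ M₂(ℤ) be an integer matrix such that tr(M)² − 4·det(M) is a non-square modulo p (equivalently, the characteristic polynomial of M is irreducible modulo p). Then there exists A ∈ SL₂(ℤ) such that the reduction of A·M·A⁻¹ modulo p lies in C_ns^ε(p), i.e. has the form (a b; εb a) with a, b ∈ 𝔽_p. -/
/-!
Reduce `M` to `N = (a b; c d)` over `𝔽_p`. Since `disc N · ε` is a square, there are `x, y` with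
`2x = tr N` and `ε y² = x² - det N`, i.e. the Cartan matrix `C = (x y; εy x)` has the
characteristic polynomial of `N`; and `c ≠ 0` because `disc N` is not a square. Then
`h₀ = (c, x - a; 0, εy)` is invertible with `h₀ N = C h₀`. Multiplying `h₀` on the left by a
matrix `(u v; εv u)`, which commutes with `C`, with `u² - εv² = (det h₀)⁻¹` (the norm form of
`𝔽_{p²}/𝔽_p` is onto) gives a conjugator in `SL₂(𝔽_p)`. Finally `SL₂(ℤ) → SL₂(𝔽_p)` is onto:
a matrix of `SL₂(𝔽_p)` with nonzero lower-left entry is a product of unipotent matrices, each of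
which lifts.
-/

open Matrix

open scoped MatrixGroups

namespace Matrix

theorem eq_upper_mul_lower_mul_upper {F : Type*} [Field F] {g : Matrix (Fin 2) (Fin 2) F}
    (hdet : g.det = 1) (hc : g 1 0 ≠ 0) :
    g = !![1, (g 0 0 - 1) / g 1 0; 0, 1] * !![1, 0; g 1 0, 1] *
      !![1, (g 1 1 - 1) / g 1 0; 0, 1] := by
  rw [det_fin_two] at hdet
  conv_lhs => rw [eta_fin_two g]
  simp only [mul_fin_two, EmbeddingLike.apply_eq_iff_eq, vecCons_inj, and_true]
  exact ⟨⟨by field_simp; ring, by field_simp; linear_combination -hdet⟩, by ring,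
    by field_simp; ring⟩

section Cartan

variable {R : Type*} [CommRing R]

theorem commute_cartan (ε x y u v : R) :
    Commute !![u, v; ε * v, u] !![x, y; ε * y, x] := by
  simp only [Commute, SemiconjBy, mul_fin_two]
  ring_nf

-- The rows of the intertwiner are `e₂ᵀ (N - x)` and `ε y e₂ᵀ`, where `N = (a b; c d)`.
theorem intertwiner_mul_eq_cartan_mul {a b c d ε x y : R}
    (htr : (!![x, y; ε * y, x]).trace = (!![a, b; c, d]).trace)
    (hdet : (!![x, y; ε * y, x]).det = (!![a, b; c, d]).det) :
    !![c, x - a; 0, ε * y] * !![a, b; c, d] = !![x, y; ε * y, x] * !![c, x - a; 0, ε * y] := by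
  rw [trace_fin_two_of, trace_fin_two_of] at htr
  rw [det_fin_two_of, det_fin_two_of] at hdet
  simp only [mul_fin_two, EmbeddingLike.apply_eq_iff_eq, vecCons_inj, and_true]
  exact ⟨⟨by ring, by linear_combination hdet - x * htr⟩, by ring,
    by linear_combination -(ε * y) * htr⟩

end Cartan

namespace SpecialLinearGroup

theorem map_conj {n R S : Type*} [Fintype n] [DecidableEq n] [CommRing R] [CommRing S]
    (f : R →+* S) (A : SpecialLinearGroup n R) (M : Matrix n n R) :
    ((A : Matrix n n R) * M * ((A⁻¹ : SpecialLinearGroup n R) : Matrix n n R)).map f =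
      (map f A : Matrix n n S) * M.map f * ((map f A)⁻¹ : SpecialLinearGroup n S) := by
  rw [← map_inv, map_apply_coe, map_apply_coe, RingHom.mapMatrix_apply, RingHom.mapMatrix_apply,
    Matrix.map_mul, Matrix.map_mul]

theorem exists_coe_eq_upper {n : ℕ} (t : ZMod n) :
    ∃ A : SL(2, ℤ), ((A : SL(2, ZMod n)) : Matrix (Fin 2) (Fin 2) (ZMod n)) = !![1, t; 0, 1] := by
  let A : SL(2, ℤ) := ⟨!![1, t.cast; 0, 1], by simp [det_fin_two_of]⟩
  refine ⟨A, ?_⟩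
  rw [coe_matrix_coe]
  ext i j; fin_cases i <;> fin_cases j <;> simp [A]

theorem exists_coe_eq_lower {n : ℕ} (t : ZMod n) :
    ∃ A : SL(2, ℤ), ((A : SL(2, ZMod n)) : Matrix (Fin 2) (Fin 2) (ZMod n)) = !![1, 0; t, 1] := by
  let A : SL(2, ℤ) := ⟨!![1, 0; t.cast, 1], by simp [det_fin_two_of]⟩
  refine ⟨A, ?_⟩
  rw [coe_matrix_coe]
  ext i j; fin_cases i <;> fin_cases j <;> simp [A]

variable {p : ℕ} [Fact p.Prime]

theorem exists_coe_eq_of_ne_zero (g : SL(2, ZMod p))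
    (hc : (g : Matrix (Fin 2) (Fin 2) (ZMod p)) 1 0 ≠ 0) :
    ∃ A : SL(2, ℤ), (A : SL(2, ZMod p)) = g := by
  set m : Matrix (Fin 2) (Fin 2) (ZMod p) := ↑g
  obtain ⟨A₁, h₁⟩ := exists_coe_eq_upper ((m 0 0 - 1) / m 1 0)
  obtain ⟨A₂, h₂⟩ := exists_coe_eq_lower (m 1 0)
  obtain ⟨A₃, h₃⟩ := exists_coe_eq_upper ((m 1 1 - 1) / m 1 0)
  refine ⟨A₁ * A₂ * A₃, Subtype.ext ?_⟩
  rw [map_mul, map_mul, coe_mul, coe_mul, h₁, h₂, h₃]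
  exact (eq_upper_mul_lower_mul_upper g.det_coe hc).symm

variable (p) in
theorem map_intCast_surjective : Function.Surjective ((↑) : SL(2, ℤ) → SL(2, ZMod p)) := by
  intro g
  rcases ne_or_eq ((g : Matrix (Fin 2) (Fin 2) (ZMod p)) 1 0) 0 with hc | hc
  · exact exists_coe_eq_of_ne_zero g hc
  obtain ⟨L, hL⟩ := exists_coe_eq_lower (1 : ZMod p)
  have hgL : ((g * L : SL(2, ZMod p)) : Matrix (Fin 2) (Fin 2) (ZMod p)) 1 0 ≠ 0 := by
    have hdet := g.det_coe
    rw [det_fin_two, hc, mul_zero, sub_zero] at hdet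
    simpa [hL, mul_apply, Fin.sum_univ_two, hc] using right_ne_zero_of_mul_eq_one hdet
  obtain ⟨A, hA⟩ := exists_coe_eq_of_ne_zero _ hgL
  exact ⟨A * L⁻¹, by rw [map_mul, map_inv, hA, mul_inv_cancel_right]⟩

end SpecialLinearGroup

end Matrix

namespace FiniteField

variable {F : Type*} [Field F] [Fintype F]

theorem exists_sq_sub_mul_sq_eq {ε : F} (hε : ε ≠ 0) (s : F) :
    ∃ u v : F, u ^ 2 - ε * v ^ 2 = s := by
  by_cases hF : ringChar F = 2
  · obtain ⟨u, rfl⟩ := isSquare_of_char_two hF s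
    exact ⟨u, 0, by ring⟩
  open Polynomial in
  obtain ⟨u, v, huv⟩ := exists_root_sum_quadratic
    (f := X ^ 2 - C s) (g := -C ε * X ^ 2) (degree_X_pow_sub_C two_pos s)
    (by rw [← C_neg]; exact degree_C_mul_X_pow 2 (neg_ne_zero.mpr hε))
    (odd_card_of_char_ne_two hF)
  refine ⟨u, v, ?_⟩
  simp only [Polynomial.eval_sub, Polynomial.eval_pow, Polynomial.eval_X, Polynomial.eval_C,
    Polynomial.eval_mul, Polynomial.eval_neg] at huv
  linear_combination huv

theorem isSquare_mul_of_not_isSquare {a b : F} (ha : ¬IsSquare a) (hb : ¬IsSquare b) :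
    IsSquare (a * b) := by
  classical
  have ha0 : a ≠ 0 := by rintro rfl; exact ha .zero
  have hb0 : b ≠ 0 := by rintro rfl; exact hb .zero
  rw [← quadraticChar_one_iff_isSquare (mul_ne_zero ha0 hb0), map_mul,
    quadraticChar_neg_one_iff_not_isSquare.mpr ha, quadraticChar_neg_one_iff_not_isSquare.mpr hb]
  norm_num

theorem exists_cartan_trace_det_eq {ε : F} (hε : ¬IsSquare ε) (N : Matrix (Fin 2) (Fin 2) F)
    (hN : ¬IsSquare (N.trace ^ 2 - 4 * N.det)) :
    ∃ x y : F, y ≠ 0 ∧ (!![x, y; ε * y, x]).trace = N.trace ∧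
      (!![x, y; ε * y, x]).det = N.det := by
  have h2 : (2 : F) ≠ 0 := Ring.two_ne_zero fun hF ↦ hε (isSquare_of_char_two hF ε)
  have hε0 : ε ≠ 0 := by rintro rfl; exact hε .zero
  have hN0 : N.trace ^ 2 - 4 * N.det ≠ 0 := by intro h0; exact hN (h0 ▸ .zero)
  obtain ⟨τ, hτ⟩ := isSquare_mul_of_not_isSquare hN hε
  have hτ0 : τ ≠ 0 := by rintro rfl; simp [hN0, hε0] at hτ
  refine ⟨N.trace / 2, τ / (2 * ε), by simp [hτ0, hε0, h2], ?_, ?_⟩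
  · rw [trace_fin_two_of]; field_simp; ring
  · rw [det_fin_two_of]
    field_simp
    linear_combination hτ

theorem exists_SL_conj_eq_cartan {ε : F} (hε : ¬IsSquare ε) (N : Matrix (Fin 2) (Fin 2) F)
    (hN : ¬IsSquare (N.trace ^ 2 - 4 * N.det)) :
    ∃ (h : SL(2, F)) (x y : F),
      (h : Matrix (Fin 2) (Fin 2) F) * N * ((h⁻¹ : SL(2, F)) : Matrix (Fin 2) (Fin 2) F) =
        !![x, y; ε * y, x] := by
  have hε0 : ε ≠ 0 := by rintro rfl; exact hε .zero
  obtain ⟨x, y, hy, htr, hdet⟩ := exists_cartan_trace_det_eq hε N hN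
  obtain ⟨a, b, c, d, rfl⟩ : ∃ a b c d, N = !![a, b; c, d] := ⟨_, _, _, _, N.eta_fin_two⟩
  have hc : c ≠ 0 := by
    rintro rfl
    exact hN ⟨a - d, by rw [trace_fin_two_of, det_fin_two_of]; ring⟩
  set h₀ := !![c, x - a; 0, ε * y]
  have hdet₀ : h₀.det ≠ 0 := by simp [h₀, det_fin_two_of, hc, hε0, hy]
  obtain ⟨u, v, huv⟩ := exists_sq_sub_mul_sq_eq hε0 h₀.det⁻¹
  obtain ⟨h, hh⟩ : ∃ h : SL(2, F),
      (h : Matrix (Fin 2) (Fin 2) F) * !![a, b; c, d] = !![x, y; ε * y, x] * h := by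
    refine ⟨⟨!![u, v; ε * v, u] * h₀, ?_⟩, ?_⟩
    · rw [det_mul, det_fin_two_of, ← inv_mul_cancel₀ hdet₀, ← huv]
      ring
    · rw [Matrix.SpecialLinearGroup.coe_mk, mul_assoc, intertwiner_mul_eq_cartan_mul htr hdet,
        ← mul_assoc, (commute_cartan ε x y u v).eq, mul_assoc]
  refine ⟨h, x, y, ?_⟩
  rw [hh, mul_assoc, ← Matrix.SpecialLinearGroup.coe_mul, mul_inv_cancel,
    Matrix.SpecialLinearGroup.coe_one, mul_one]

end FiniteField

theorem conj_into_cartan_general (p : ℕ) [Fact p.Prime]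
    (ε : ZMod p) (hε : ¬ IsSquare ε) (M : Matrix (Fin 2) (Fin 2) ℤ)
    (hM : ¬ IsSquare ((M.trace ^ 2 - 4 * M.det : ℤ) : ZMod p)) :
    ∃ A : Matrix.SpecialLinearGroup (Fin 2) ℤ,
      (((A : Matrix (Fin 2) (Fin 2) ℤ) * M * ((A⁻¹ : Matrix.SpecialLinearGroup (Fin 2) ℤ)
          : Matrix (Fin 2) (Fin 2) ℤ)).map (fun x : ℤ => (x : ZMod p)))
        ∈ CnsSet p ε := by
  set N := M.map (Int.castRingHom (ZMod p))
  have hN : ¬IsSquare (N.trace ^ 2 - 4 * N.det) := by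
    simpa [N, trace_fin_two, det_fin_two] using hM
  obtain ⟨h, x, y, hconj⟩ := FiniteField.exists_SL_conj_eq_cartan hε N hN
  obtain ⟨A, rfl⟩ := Matrix.SpecialLinearGroup.map_intCast_surjective p h
  refine ⟨A, ?_⟩
  rw [show (fun x : ℤ => (x : ZMod p)) = Int.castRingHom (ZMod p) from rfl,
    Matrix.SpecialLinearGroup.map_conj, hconj]
  exact ⟨rfl, rfl⟩

/-- An integer matrix whose characteristic polynomial is irreducible modulo `p`
(i.e. whose discriminant `tr(M)² - 4·det(M)` is a non-square mod `p`) can be conjugated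
by an element of `SL₂(ℤ)` into the Cartan non-split ring modulo `p`. -/
theorem conj_into_cartan (p : ℕ) [Fact p.Prime] (hp : Odd p)
    (ε : ZMod p) (hε : ¬ IsSquare ε) (M : Matrix (Fin 2) (Fin 2) ℤ)
    (hM : ¬ IsSquare ((M.trace ^ 2 - 4 * M.det : ℤ) : ZMod p)) :
    ∃ A : Matrix.SpecialLinearGroup (Fin 2) ℤ,
      (((A : Matrix (Fin 2) (Fin 2) ℤ) * M * ((A⁻¹ : Matrix.SpecialLinearGroup (Fin 2) ℤ)
          : Matrix (Fin 2) (Fin 2) ℤ)).map (fun x : ℤ => (x : ZMod p)))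
        ∈ CnsSet p ε :=
  conj_into_cartan_general p ε hε M hM
end
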